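/- The matrices M^{ij} = -½ V^T E^{ij} V for 1 ≤ i < j ≤ n are linearly independent in S^{n-1}, where V is an n×(n-1) matrix with V^T e = 0 and V^T V = I. -/

import Mathlib

open Matrix BigOperators

def Eij {n : ℕ} (i j : Fin n) : Matrix (Fin n) (Fin n) ℝ :=
  Matrix.single i j 1 + Matrix.single j i 1

/-!
For `i < j` put `wᵢⱼ = Vᵀ (eᵢ - eⱼ)`. Completing `V` by the column `e` gives a square matrix
with a left inverse, hence a right inverse, so `V Vᵀ = I - eeᵀ/n` fixes `eᵢ - eⱼ ∈ e^⊥`. Therefore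
`wᵢⱼᵀ M^{kl} wᵢⱼ = -½ (eᵢ - eⱼ)ᵀ E^{kl} (eᵢ - eⱼ) = δ_{(i,j),(k,l)}`: the quadratic forms at the
`wᵢⱼ` are a dual family for the `M^{kl}`, which are thus linearly independent.
-/

namespace Matrix

variable {m k : Type*} [Fintype m] [Fintype k]

theorem dotProduct_transpose_mul_mul_mulVec {R : Type*} [CommSemiring R] (V : Matrix m k R)
    (A : Matrix m m R) (y : k → R) :
    y ⬝ᵥ (Vᵀ * A * V) *ᵥ y = (V *ᵥ y) ⬝ᵥ A *ᵥ V *ᵥ y := by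
  rw [← mulVec_mulVec, ← mulVec_mulVec, dotProduct_mulVec, vecMul_transpose]

variable {R : Type*} [Field R] [DecidableEq m] [DecidableEq k]

theorem mul_transpose_add_smul_vecMulVec_eq_one (e : k ⊕ Unit ≃ m) {V : Matrix m k R}
    {u : m → R} (hVV : Vᵀ * V = 1) (hVu : Vᵀ *ᵥ u = 0) (hu : u ⬝ᵥ u ≠ 0) :
    V * Vᵀ + (u ⬝ᵥ u)⁻¹ • vecMulVec u u = 1 := by
  set W := fromCols V (replicateCol Unit u)
  set B := fromRows Vᵀ (replicateRow Unit ((u ⬝ᵥ u)⁻¹ • u))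
  have hBW : B * W = 1 := by
    rw [fromRows_mul_fromCols, hVV, ← replicateCol_mulVec, hVu, ← replicateRow_vecMul,
      ← mulVec_transpose, mulVec_smul, hVu, smul_zero, replicateRow_mul_replicateCol,
      smul_dotProduct, smul_eq_mul, inv_mul_cancel₀ hu, replicateCol_zero, replicateRow_zero,
      ← fromBlocks_one]
    congr
  rw [← (mul_eq_one_comm_of_equiv e).mp hBW, fromCols_mul_fromRows, vecMulVec_eq Unit,
    replicateRow_smul, Matrix.mul_smul]

theorem mulVec_transpose_mulVec_of_dotProduct_eq_zero (e : k ⊕ Unit ≃ m) {V : Matrix m k R}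
    {u : m → R} (hVV : Vᵀ * V = 1) (hVu : Vᵀ *ᵥ u = 0) (hu : u ⬝ᵥ u ≠ 0) {x : m → R}
    (hx : u ⬝ᵥ x = 0) : V *ᵥ Vᵀ *ᵥ x = x := by
  have := congrArg (· *ᵥ x) (mul_transpose_add_smul_vecMulVec_eq_one e hVV hVu hu)
  simpa [add_mulVec, smul_mulVec, vecMulVec_mulVec, hx] using this

end Matrix

theorem dotProduct_Eij_mulVec {n : ℕ} (i j : Fin n) (x : Fin n → ℝ) :
    x ⬝ᵥ Eij i j *ᵥ x = 2 * (x i * x j) := by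
  simp only [Eij, add_mulVec, single_mulVec, dotProduct_add, ← Pi.single.eq_def, dotProduct_single]
  ring

theorem single_sub_single_mul_single_sub_single {ι R : Type*} [LinearOrder ι] [Ring R]
    {i j k l : ι} (hij : i < j) (hkl : k < l) :
    (Pi.single i 1 - Pi.single j 1 : ι → R) k * (Pi.single i 1 - Pi.single j 1 : ι → R) l =
      if k = i ∧ l = j then -1 else 0 := by
  simp only [Pi.sub_apply, Pi.single_apply]
  split_ifs <;> first | (exfalso; order) | simp_all

theorem stmt6 (n : ℕ) (V : Matrix (Fin n) (Fin (n - 1)) ℝ)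
    (hVe : Vᵀ *ᵥ (fun _ => (1 : ℝ)) = 0) (hVV : Vᵀ * V = 1) :
    LinearIndependent ℝ (fun q : {q : Fin n × Fin n // q.1 < q.2} =>
      (-(1/2) : ℝ) • (Vᵀ * Eij q.1.1 q.1.2 * V)) := by
  let w (q : {q : Fin n × Fin n // q.1 < q.2}) : Fin (n - 1) → ℝ :=
    Vᵀ *ᵥ (Pi.single q.1.1 1 - Pi.single q.1.2 1)
  let Ψ : Matrix (Fin (n - 1)) (Fin (n - 1)) ℝ →ₗ[ℝ] {q : Fin n × Fin n // q.1 < q.2} → ℝ :=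
    LinearMap.pi fun q => LinearMap.applyₗ (w q) ∘ₗ LinearMap.applyₗ (w q) ∘ₗ
      (Matrix.toLinearMap₂' ℝ).toLinearMap
  refine LinearIndependent.of_comp Ψ ?_
  convert Pi.linearIndependent_single_one {q : Fin n × Fin n // q.1 < q.2} ℝ with p
  ext q
  obtain ⟨⟨i, j⟩, hij⟩ := q
  have hn : (n : ℝ) ≠ 0 := Nat.cast_ne_zero.mpr (Fin.pos i).ne'
  have e : Fin (n - 1) ⊕ Unit ≃ Fin n := Fintype.equivOfCardEq (by simp; omega)
  have hfix : V *ᵥ w ⟨(i, j), hij⟩ = Pi.single i 1 - Pi.single j 1 :=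
    mulVec_transpose_mulVec_of_dotProduct_eq_zero e hVV hVe (by simpa [dotProduct] using hn)
      (by simp [dotProduct_sub])
  simp only [Ψ, Function.comp_apply, map_smul, LinearMap.pi_apply, LinearMap.coe_comp,
    LinearEquiv.coe_coe, LinearMap.applyₗ_apply_apply, toLinearMap₂'_apply',
    dotProduct_transpose_mul_mul_mulVec, hfix, dotProduct_Eij_mulVec,
    single_sub_single_mul_single_sub_single hij p.2, smul_eq_mul, Pi.single_apply,
    Subtype.ext_iff, Prod.ext_iff, eq_comm]
  split_ifs <;> norm_num
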